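/- arXiv:math/0603248 — 4 statements merged into one kernel-verified Lean document; each statement's English description precedes it below -/
import Mathlib

section
/- Let U ⊆ ℝ^k be a compact (closed and bounded) set, ℓ : U → [0,∞) continuous, a ∈ ℝ^k, V = {(x,t) ∈ ℝ^k × ℝ : x ∈ U, 0 ≤ t ≤ ℓ(x)}, and let γ : V → ℝ^k be a parametrized path with base U, length function ℓ and endpoint a. Then the image γ(V), equipped with the subspace topology from ℝ^k, is a contractible topological space. -/
open Set

/-- A parametrized path in `ℝ^k` with base `U`, length function `ℓ` and endpoint `a`
(conditions (i)-(iv) are the hypotheses `hend`, `hstart`, `hinj`, `hdiv` below).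
If the base `U` is compact (closed and bounded), then the image `γ '' V`,
with the subspace topology from `ℝ^k`, is contractible. -/
theorem image_of_parametrized_path_contractible
    {k : ℕ} (U : Set (Fin k → ℝ)) (ℓ : (Fin k → ℝ) → ℝ) (a : Fin k → ℝ)
    (V : Set ((Fin k → ℝ) × ℝ)) (γ : (Fin k → ℝ) × ℝ → (Fin k → ℝ))
    (hUne : U.Nonempty)
    (hU : IsCompact U)
    (hℓcont : ContinuousOn ℓ U)
    (hℓnonneg : ∀ x ∈ U, 0 ≤ ℓ x)
    (hV : V = {p : (Fin k → ℝ) × ℝ | p.1 ∈ U ∧ 0 ≤ p.2 ∧ p.2 ≤ ℓ p.1})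
    (hγcont : ContinuousOn γ V)
    (hend : ∀ x ∈ U, γ (x, 0) = a)
    (hstart : ∀ x ∈ U, γ (x, ℓ x) = x)
    (hinj : ∀ p ∈ V, ∀ q ∈ V, γ p = γ q → p.2 = q.2)
    (hdiv : ∀ x ∈ U, ∀ y ∈ U, ∀ s : ℝ, 0 ≤ s → s ≤ min (ℓ x) (ℓ y) →
      γ (x, s) = γ (y, s) → ∀ t : ℝ, 0 ≤ t → t ≤ s → γ (x, t) = γ (y, t)) :
    ContractibleSpace ↥(γ '' V) := by
  classical
  -- basic membership facts
  have hVsub : ∀ p : (Fin k → ℝ) × ℝ, p ∈ V → p.1 ∈ U ∧ 0 ≤ p.2 ∧ p.2 ≤ ℓ p.1 := by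
    intro p hp; rwa [hV] at hp
  have hmemV : ∀ x ∈ U, ∀ t : ℝ, 0 ≤ t → t ≤ ℓ x → (x, t) ∈ V := by
    intro x hx t ht0 htl; rw [hV]; exact ⟨hx, ht0, htl⟩
  -- V is compact
  have hVcomp : IsCompact V := by
    have himg : V = (fun p : (Fin k → ℝ) × ℝ => (p.1, p.2 * ℓ p.1)) '' (U ×ˢ Icc (0:ℝ) 1) := by
      ext ⟨x, t⟩
      constructor
      · intro hp
        obtain ⟨hx, ht0, htl⟩ := hVsub _ hp
        by_cases hlx : ℓ x = 0
        · refine ⟨(x, 0), ⟨hx, le_rfl, zero_le_one⟩, ?_⟩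
          have : t = 0 := le_antisymm (hlx ▸ htl) ht0
          simp [this]
        · have hlxpos : 0 < ℓ x := lt_of_le_of_ne (hℓnonneg x hx) (Ne.symm hlx)
          refine ⟨(x, t / ℓ x), ⟨hx, div_nonneg ht0 hlxpos.le, (div_le_one hlxpos).mpr htl⟩, ?_⟩
          simp [div_mul_cancel₀ t hlx]
      · rintro ⟨⟨x', r⟩, ⟨hx', hr0, hr1⟩, heq⟩
        rw [← heq]
        exact hmemV x' hx' _ (mul_nonneg hr0 (hℓnonneg x' hx'))
          (by calc r * ℓ x' ≤ 1 * ℓ x' := by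
                    exact mul_le_mul_of_nonneg_right hr1 (hℓnonneg x' hx')
                  _ = ℓ x' := one_mul _)
    rw [himg]
    refine (hU.prod isCompact_Icc).image_of_continuousOn ?_
    exact continuousOn_fst.prodMk (continuousOn_snd.mul
      (hℓcont.comp continuousOn_fst (fun p (hp : p ∈ U ×ˢ Icc (0:ℝ) 1) => hp.1)))
  have hScomp : IsCompact (γ '' V) := hVcomp.image_of_continuousOn hγcont
  haveI : CompactSpace ↥V := isCompact_iff_compactSpace.mp hVcomp
  haveI : CompactSpace ↥(γ '' V) := isCompact_iff_compactSpace.mp hScomp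
  obtain ⟨x0, hx0⟩ := hUne
  have haS : a ∈ γ '' V :=
    ⟨(x0, 0), hmemV x0 hx0 0 le_rfl (hℓnonneg x0 hx0), hend x0 hx0⟩
  -- the quotient map q : V → γ '' V
  set q : ↥V → ↥(γ '' V) := fun v => ⟨γ v.1, mem_image_of_mem γ v.2⟩ with hqdef
  have hqcont : Continuous q := (hγcont.restrict).subtype_mk _
  have hqsurj : Function.Surjective q := by
    rintro ⟨y, v, hv, hy⟩
    exact ⟨⟨v, hv⟩, Subtype.ext hy⟩
  set Q : unitInterval × ↥V → unitInterval × ↥(γ '' V) := Prod.map id q with hQdef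
  have hQcont : Continuous Q := continuous_id.prodMap hqcont
  have hQsurj : Function.Surjective Q := Function.Surjective.prodMap Function.surjective_id hqsurj
  have hQ : Topology.IsQuotientMap Q := (hQcont.isClosedMap).isQuotientMap hQcont hQsurj
  -- the auxiliary map Φ
  have hΦmem : ∀ (r : unitInterval) (v : ↥V), (v.1.1, (r : ℝ) * v.1.2) ∈ V := by
    intro r v
    obtain ⟨hx, ht0, htl⟩ := hVsub _ v.2
    refine hmemV _ hx _ (mul_nonneg r.2.1 ht0) ?_
    calc (r : ℝ) * v.1.2 ≤ 1 * v.1.2 := mul_le_mul_of_nonneg_right r.2.2 ht0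
      _ = v.1.2 := one_mul _
      _ ≤ ℓ v.1.1 := htl
  set Φ : unitInterval × ↥V → ↥(γ '' V) :=
    fun p => ⟨γ (p.2.1.1, (p.1 : ℝ) * p.2.1.2), mem_image_of_mem γ (hΦmem p.1 p.2)⟩ with hΦdef
  have hΦcont : Continuous Φ := by
    refine Continuous.subtype_mk ?_ _
    have hg : Continuous fun p : unitInterval × ↥V =>
        ((p.2.1.1, (p.1 : ℝ) * p.2.1.2) : (Fin k → ℝ) × ℝ) := by fun_prop
    exact hγcont.comp_continuous hg (fun p => hΦmem p.1 p.2)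
  -- well-definedness: Φ factors through Q
  have key : ∀ (r : unitInterval) (v w : ↥V), q v = q w → Φ (r, v) = Φ (r, w) := by
    intro r v w hqvw
    have hγeq : γ v.1 = γ w.1 := congrArg Subtype.val hqvw
    have hs : v.1.2 = w.1.2 := hinj v.1 v.2 w.1 w.2 hγeq
    obtain ⟨hxU, hs0, hsl⟩ := hVsub _ v.2
    obtain ⟨hyU, _, htl⟩ := hVsub _ w.2
    have hγ' : γ (v.1.1, v.1.2) = γ (w.1.1, v.1.2) := by
      nth_rewrite 2 [hs]; exact hγeq
    have h2 := hdiv v.1.1 hxU w.1.1 hyU v.1.2 hs0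
      (le_min hsl (hs ▸ htl)) hγ' ((r : ℝ) * v.1.2)
      (mul_nonneg r.2.1 hs0)
      (by calc (r : ℝ) * v.1.2 ≤ 1 * v.1.2 := mul_le_mul_of_nonneg_right r.2.2 hs0
            _ = v.1.2 := one_mul _)
    apply Subtype.ext
    show γ (v.1.1, (r : ℝ) * v.1.2) = γ (w.1.1, (r : ℝ) * w.1.2)
    rw [← hs]; exact h2
  -- the homotopy
  set H : unitInterval × ↥(γ '' V) → ↥(γ '' V) :=
    fun p => Φ (p.1, Function.surjInv hqsurj p.2) with hHdef
  have hHQ : ∀ p : unitInterval × ↥V, H (Q p) = Φ p := by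
    rintro ⟨r, v⟩
    exact key r (Function.surjInv hqsurj (q v)) v (Function.surjInv_eq hqsurj (q v))
  have hHcont : Continuous H := by
    rw [hQ.continuous_iff]
    have : H ∘ Q = Φ := funext hHQ
    rw [this]; exact hΦcont
  have hH0 : ∀ p : ↥(γ '' V), H (0, p) = ⟨a, haS⟩ := by
    intro p
    apply Subtype.ext
    show γ ((Function.surjInv hqsurj p).1.1, ((0 : unitInterval) : ℝ) * _) = a
    have hxU := (hVsub _ (Function.surjInv hqsurj p).2).1
    simpa using hend _ hxU
  have hH1 : ∀ p : ↥(γ '' V), H (1, p) = p := by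
    intro p
    have hq1 : q (Function.surjInv hqsurj p) = p := Function.surjInv_eq hqsurj p
    apply Subtype.ext
    show γ ((Function.surjInv hqsurj p).1.1, ((1 : unitInterval) : ℝ) * (Function.surjInv hqsurj p).1.2) = (p : Fin k → ℝ)
    rw [← congrArg Subtype.val hq1]
    show γ (_, ((1 : unitInterval) : ℝ) * _) = γ (Function.surjInv hqsurj p).1
    simp
  refine (contractible_iff_id_nullhomotopic _).mpr ⟨⟨a, haS⟩, ?_⟩
  exact ⟨(ContinuousMap.Homotopy.symm
    { toFun := H
      continuous_toFun := hHcont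
      map_zero_left := fun p => hH0 p
      map_one_left := fun p => hH1 p })⟩
end

section
/- Let U ⊆ ℝ^k be compact, and let γ : V → ℝ^k be a parametrized path with base U, length function ℓ and endpoint a. Let M = sup_{x∈U} ℓ(x), and let φ : γ(V) × [0,M] → γ(V) be the well-defined map given by φ(γ(x,t), s) = γ(x, min(s,t)). Then φ is continuous (where γ(V) carries the subspace topology from ℝ^k). -/
open Set
open Topology

/-- For a parametrized path `γ : V → ℝ^k` with compact base `U`, length function `ℓ` and
endpoint `a` (conditions (i)-(iv) are the hypotheses `hend`, `hstart`, `hinj`, `hdiv` below),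
with `M = sup_{x ∈ U} ℓ x`, the (well-defined) map `φ : γ(V) × [0,M] → γ(V)` determined by
`φ (γ(x,t), s) = γ(x, min s t)` is continuous (with `γ(V)` carrying the subspace topology
from `ℝ^k`). -/
theorem parametrized_path_contraction_continuous
    {k : ℕ} (U : Set (Fin k → ℝ)) (ℓ : (Fin k → ℝ) → ℝ) (a : Fin k → ℝ) (M : ℝ)
    (V : Set ((Fin k → ℝ) × ℝ)) (γ : (Fin k → ℝ) × ℝ → (Fin k → ℝ))
    (φ : (Fin k → ℝ) → ℝ → (Fin k → ℝ))
    (hU : IsCompact U)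
    (hℓcont : ContinuousOn ℓ U)
    (hℓnonneg : ∀ x ∈ U, 0 ≤ ℓ x)
    (hM : IsLUB (ℓ '' U) M)
    (hV : V = {p : (Fin k → ℝ) × ℝ | p.1 ∈ U ∧ 0 ≤ p.2 ∧ p.2 ≤ ℓ p.1})
    (hγcont : ContinuousOn γ V)
    (hend : ∀ x ∈ U, γ (x, 0) = a)
    (hstart : ∀ x ∈ U, γ (x, ℓ x) = x)
    (hinj : ∀ p ∈ V, ∀ q ∈ V, γ p = γ q → p.2 = q.2)
    (hdiv : ∀ x ∈ U, ∀ y ∈ U, ∀ s : ℝ, 0 ≤ s → s ≤ min (ℓ x) (ℓ y) →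
      γ (x, s) = γ (y, s) → ∀ t : ℝ, 0 ≤ t → t ≤ s → γ (x, t) = γ (y, t))
    (hφ : ∀ p ∈ V, ∀ s ∈ Icc (0 : ℝ) M, φ (γ p) s = γ (p.1, min s p.2))
    (hφmem : ∀ w ∈ γ '' V, ∀ s ∈ Icc (0 : ℝ) M, φ w s ∈ γ '' V) :
    ContinuousOn (fun q : (Fin k → ℝ) × ℝ => φ q.1 q.2) ((γ '' V) ×ˢ Icc (0 : ℝ) M) := by
  -- V is compact: it is the continuous image of the compact set U ×ˢ [0,1]
  have hVcomp : IsCompact V := by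
    have himg : V = (fun p : (Fin k → ℝ) × ℝ => (p.1, p.2 * ℓ p.1)) '' (U ×ˢ Icc (0:ℝ) 1) := by
      ext ⟨x, t⟩
      constructor
      · rintro hp
        rw [hV] at hp
        obtain ⟨hxU, ht0, htℓ⟩ := hp
        rcases eq_or_lt_of_le (hℓnonneg x hxU) with h0 | h0
        · refine ⟨(x, 0), ⟨hxU, le_refl _, zero_le_one⟩, ?_⟩
          have ht : t = 0 := le_antisymm (htℓ.trans (by linarith)) ht0
          simp [ht]
        · refine ⟨(x, t / ℓ x), ⟨hxU, div_nonneg ht0 h0.le, div_le_one_of_le₀ htℓ h0.le⟩, ?_⟩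
          simp [div_mul_cancel₀ t h0.ne']
      · rintro ⟨⟨x', u⟩, ⟨hxU, hu0, hu1⟩, heq⟩
        rw [hV]
        simp only [Prod.mk.injEq] at heq
        obtain ⟨hx, ht⟩ := heq
        subst hx; subst ht
        exact ⟨hxU, mul_nonneg hu0 (hℓnonneg x' hxU),
          (mul_le_of_le_one_left (hℓnonneg x' hxU) hu1)⟩
    rw [himg]
    apply (hU.prod isCompact_Icc).image_of_continuousOn
    exact continuousOn_fst.prodMk (continuousOn_snd.mul
      (hℓcont.comp continuousOn_fst (fun p (hp : p ∈ U ×ˢ Icc (0:ℝ) 1) => hp.1)))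
  -- set up source and target spaces
  set S : Set (((Fin k → ℝ) × ℝ) × ℝ) := V ×ˢ Icc (0:ℝ) M with hS
  set T : Set ((Fin k → ℝ) × ℝ) := (γ '' V) ×ˢ Icc (0:ℝ) M with hT
  have hScomp : IsCompact S := hVcomp.prod isCompact_Icc
  haveI : CompactSpace S := isCompact_iff_compactSpace.mp hScomp
  -- the map G : S → T
  have hGmem : ∀ q : S, (γ q.1.1, q.1.2) ∈ T := by
    rintro ⟨⟨p, s⟩, hpV, hs⟩
    exact ⟨⟨p, hpV, rfl⟩, hs⟩
  set G : S → T := fun q => ⟨(γ q.1.1, q.1.2), hGmem q⟩ with hG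
  have hGcont : Continuous G := by
    apply Continuous.subtype_mk
    apply Continuous.prodMk
    · exact hγcont.comp_continuous (continuous_fst.comp continuous_subtype_val)
        (fun q => q.2.1)
    · exact continuous_snd.comp continuous_subtype_val
  have hGsurj : Function.Surjective G := by
    rintro ⟨⟨w, s⟩, hw, hs⟩
    obtain ⟨p, hpV, hpw⟩ := hw
    exact ⟨⟨(p, s), hpV, hs⟩, Subtype.ext (by simp [hG, hpw])⟩
  have hquot : IsQuotientMap G :=
    IsQuotientMap.of_surjective_continuous hGsurj hGcont
  -- the map F : S → ℝ^k
  have hminV : ∀ q : S, (q.1.1.1, min q.1.2 q.1.1.2) ∈ V := by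
    intro q
    have h1 : q.1.1 ∈ V := q.2.1
    have h2 : q.1.2 ∈ Icc (0:ℝ) M := q.2.2
    rw [hV] at h1 ⊢
    exact ⟨h1.1, le_min h2.1 h1.2.1, (min_le_right _ _).trans h1.2.2⟩
  have hFcont : Continuous (fun q : S => γ (q.1.1.1, min q.1.2 q.1.1.2)) := by
    apply hγcont.comp_continuous _ hminV
    apply Continuous.prodMk
    · exact continuous_fst.comp (continuous_fst.comp continuous_subtype_val)
    · exact (continuous_snd.comp continuous_subtype_val).min
        (continuous_snd.comp (continuous_fst.comp continuous_subtype_val))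
  -- φ restricted to T, as a map on the subtype
  set φ' : T → (Fin k → ℝ) := fun w => φ w.1.1 w.1.2 with hφ'
  have hfact : φ' ∘ G = fun q : S => γ (q.1.1.1, min q.1.2 q.1.1.2) := by
    funext q
    exact hφ q.1.1 q.2.1 q.1.2 q.2.2
  have hφ'cont : Continuous φ' := by
    rw [hquot.continuous_iff, hfact]
    exact hFcont
  rw [continuousOn_iff_continuous_restrict]
  exact hφ'cont
end

section
/- Let A = {P_1,…,P_t} be a finite family of t polynomials in ℝ[X_1,…,X_k], and let S ⊆ ℝ^k be a closed and bounded set which equals the union of the realizations R(σ) over all σ ∈ Sign(A,S). Then there exist real numbers 0 < ε_1 < ε_2 < ⋯ < ε_{2t} such that S = ⋃_{σ ∈ Sign(A,S)} R(σ_−^+), where for a sign condition σ ∈ Sign(A,S) of level j, R(σ_−^+) = {x ∈ S : |P(x)| ≤ ε_{2j−1} for every P ∈ A with σ(P) = 0, P(x) ≥ ε_{2j} for every P ∈ A with σ(P) = 1, and P(x) ≤ −ε_{2j} for every P ∈ A with σ(P) = −1}. -/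
open MvPolynomial Set

/-- The realization `R(σ)` of a sign condition `σ` on the finite family of polynomials
`A = (A 0, …, A (t-1))` in `ℝ[X_1,…,X_k]`. -/
def signRealization {k t : ℕ} (A : Fin t → MvPolynomial (Fin k) ℝ)
    (σ : Fin t → SignType) : Set (Fin k → ℝ) :=
  {x | ∀ i, SignType.sign (eval x (A i)) = σ i}

/-- The level of a sign condition: the number of polynomials to which it assigns the sign `0`. -/
def signLevel {t : ℕ} (σ : Fin t → SignType) : ℕ :=
  (Finset.univ.filter fun i => σ i = 0).card

/-- `Sign(A,S)`: the sign conditions on `A` with nonempty realization contained in `S`. -/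
def signCondOn {k t : ℕ} (A : Fin t → MvPolynomial (Fin k) ℝ)
    (S : Set (Fin k → ℝ)) : Set (Fin t → SignType) :=
  {σ | (signRealization A σ).Nonempty ∧ signRealization A σ ⊆ S}

/-- The set `R(σ_-^+)` associated to a sign condition `σ` of level `j`:  inside `S`, relax the
equations to `|P| ≤ ε_{2j-1}` and shrink the strict inequalities to `P ≥ ε_{2j}`
(resp. `P ≤ -ε_{2j}`). -/
def signShrunkRealization {k t : ℕ} (A : Fin t → MvPolynomial (Fin k) ℝ)
    (S : Set (Fin k → ℝ)) (ε : ℕ → ℝ) (σ : Fin t → SignType) : Set (Fin k → ℝ) :=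
  {x ∈ S | (∀ i, σ i = 0 → |eval x (A i)| ≤ ε (2 * signLevel σ - 1)) ∧
           (∀ i, σ i = 1 → ε (2 * signLevel σ) ≤ eval x (A i)) ∧
           (∀ i, σ i = -1 → eval x (A i) ≤ -ε (2 * signLevel σ))}

namespace SignCovering

variable {k t : ℕ}

/-- The sign vector of a point. -/
noncomputable def sgn (A : Fin t → MvPolynomial (Fin k) ℝ) (x : Fin k → ℝ) : Fin t → SignType :=
  fun i => SignType.sign (eval x (A i))

lemma eq_sgn_of_mem {A : Fin t → MvPolynomial (Fin k) ℝ} {σ : Fin t → SignType}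
    {x : Fin k → ℝ} (h : x ∈ signRealization A σ) : σ = sgn A x :=
  funext fun i => (h i).symm

lemma sgn_mem {A : Fin t → MvPolynomial (Fin k) ℝ} {S : Set (Fin k → ℝ)}
    (hScover : S = ⋃ σ ∈ signCondOn A S, signRealization A σ)
    {x : Fin k → ℝ} (hx : x ∈ S) : sgn A x ∈ signCondOn A S := by
  rw [hScover] at hx
  simp only [Set.mem_iUnion] at hx
  obtain ⟨σ, hσ, hxσ⟩ := hx
  rwa [eq_sgn_of_mem hxσ] at hσ

lemma signLevel_sgn (A : Fin t → MvPolynomial (Fin k) ℝ) (x : Fin k → ℝ) :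
    signLevel (sgn A x) = (Finset.univ.filter fun m => eval x (A m) = 0).card := by
  unfold signLevel sgn
  congr 1
  apply Finset.filter_congr
  intro i _
  simp [sign_eq_zero_iff]

lemma signLevel_le (σ : Fin t → SignType) : signLevel σ ≤ t := by
  unfold signLevel
  simpa using Finset.card_filter_le Finset.univ fun i => σ i = 0

lemma all_zero_of_level_eq {σ : Fin t → SignType} (h : signLevel σ = t) : ∀ i, σ i = 0 := by
  intro i
  have huniv : (Finset.univ.filter fun i => σ i = 0) = Finset.univ :=
    Finset.eq_univ_of_card _ (by simpa [signLevel] using h)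
  have hi : i ∈ Finset.univ.filter fun i => σ i = 0 := by
    rw [huniv]; exact Finset.mem_univ i
  exact (Finset.mem_filter.mp hi).2

/-- Strict covering at level `l`. -/
def SCov (A : Fin t → MvPolynomial (Fin k) ℝ) (S : Set (Fin k → ℝ)) (e : ℕ → ℝ) (l : ℕ)
    (x : Fin k → ℝ) : Prop :=
  ∃ σ ∈ signCondOn A S, l ≤ signLevel σ ∧
    (∀ i, σ i = 0 → |eval x (A i)| < e (signLevel σ) / 2) ∧
    (∀ i, σ i = 1 → e (signLevel σ) < eval x (A i)) ∧
    (∀ i, σ i = -1 → eval x (A i) < - e (signLevel σ))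

lemma isOpen_imp {α : Type*} [TopologicalSpace α] {c : Prop} {p : α → Prop}
    (hp : IsOpen {x | p x}) : IsOpen {x | c → p x} := by
  by_cases h : c
  · simpa [h] using hp
  · have : {x : α | c → p x} = Set.univ := by ext x; simp [h]
    rw [this]; exact isOpen_univ

lemma isOpen_sCov (A : Fin t → MvPolynomial (Fin k) ℝ) (S : Set (Fin k → ℝ)) (e : ℕ → ℝ) (l : ℕ) :
    IsOpen {x | SCov A S e l x} := by
  have hrw : {x | SCov A S e l x} =
      ⋃ (σ : Fin t → SignType) (_ : σ ∈ signCondOn A S ∧ l ≤ signLevel σ),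
        ⋂ i : Fin t,
          ({x : Fin k → ℝ | σ i = 0 → |eval x (A i)| < e (signLevel σ) / 2} ∩
            ({x : Fin k → ℝ | σ i = 1 → e (signLevel σ) < eval x (A i)} ∩
              {x : Fin k → ℝ | σ i = -1 → eval x (A i) < - e (signLevel σ)})) := by
    ext x
    simp only [SCov, Set.mem_setOf_eq, Set.mem_iUnion, Set.mem_iInter, Set.mem_inter_iff]
    constructor
    · rintro ⟨σ, h1, h2, h3, h4, h5⟩
      exact ⟨σ, ⟨h1, h2⟩, fun i => ⟨h3 i, h4 i, h5 i⟩⟩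
    · rintro ⟨σ, ⟨h1, h2⟩, h⟩
      exact ⟨σ, h1, h2, fun i => (h i).1, fun i => (h i).2.1, fun i => (h i).2.2⟩
  rw [hrw]
  refine isOpen_iUnion fun σ => isOpen_iUnion fun _ => isOpen_iInter_of_finite fun i => ?_
  refine IsOpen.inter ?_ (IsOpen.inter ?_ ?_)
  · exact isOpen_imp (isOpen_lt (continuous_abs.comp (MvPolynomial.continuous_eval (A i))) continuous_const)
  · exact isOpen_imp (isOpen_lt continuous_const (MvPolynomial.continuous_eval (A i)))
  · exact isOpen_imp (isOpen_lt (MvPolynomial.continuous_eval (A i)) continuous_const)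

lemma isClosed_levelSet (A : Fin t → MvPolynomial (Fin k) ℝ) (s : Finset (Fin t)) (j : ℕ) :
    IsClosed {x : Fin k → ℝ | j ≤ (s.filter fun m => eval x (A m) = 0).card} := by
  classical
  have hrw : {x : Fin k → ℝ | j ≤ (s.filter fun m => eval x (A m) = 0).card} =
      ⋃ Z ∈ {Z : Finset (Fin t) | Z ⊆ s ∧ Z.card = j},
        ⋂ m ∈ (Z : Finset (Fin t)), {x : Fin k → ℝ | eval x (A m) = 0} := by
    ext x
    simp only [Set.mem_setOf_eq, Set.mem_iUnion, Set.mem_iInter]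
    constructor
    · intro h
      obtain ⟨Z, hZ, hZcard⟩ := Finset.exists_subset_card_eq h
      refine ⟨Z, ⟨hZ.trans (Finset.filter_subset _ _), hZcard⟩, fun m hm => ?_⟩
      exact (Finset.mem_filter.mp (hZ hm)).2
    · rintro ⟨Z, ⟨hZs, hZcard⟩, h⟩
      calc j = Z.card := hZcard.symm
        _ ≤ _ := Finset.card_le_card fun m hm => Finset.mem_filter.mpr ⟨hZs hm, h m hm⟩
  rw [hrw]
  exact (Set.toFinite _).isClosed_biUnion fun Z _ =>
    isClosed_biInter fun m _ => isClosed_eq (MvPolynomial.continuous_eval (A m)) continuous_const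

end SignCovering

namespace SignCovering

lemma key {k t : ℕ} (A : Fin t → MvPolynomial (Fin k) ℝ) (S : Set (Fin k → ℝ))
    (hScompact : IsCompact S)
    (hmem : ∀ x ∈ S, sgn A x ∈ signCondOn A S) (d : ℕ) :
    ∃ e : ℕ → ℝ, (∀ j, 0 < e j) ∧ (∀ j, e j < e (j + 1)) ∧
      ∀ x ∈ S, t - d ≤ signLevel (sgn A x) → SCov A S e (t - d) x := by
  classical
  induction d with
  | zero =>
    refine ⟨fun j => 2 ^ j, fun j => by positivity, fun j => ?_, ?_⟩
    · have h2 := pow_pos (by norm_num : (0:ℝ) < 2) j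
      show (2:ℝ) ^ j < 2 ^ (j + 1)
      rw [pow_succ]; linarith
    · intro x hx hlev
      simp only [Nat.sub_zero] at hlev
      have hlev' : signLevel (sgn A x) = t := le_antisymm (signLevel_le _) hlev
      have hall := all_zero_of_level_eq hlev'
      refine ⟨sgn A x, hmem x hx, by simp only [Nat.sub_zero]; exact hlev'.ge, ?_, ?_, ?_⟩
      · intro i hi
        have h0 : eval x (A i) = 0 := sign_eq_zero_iff.mp hi
        rw [h0, abs_zero]
        have := pow_pos (by norm_num : (0:ℝ) < 2) (signLevel (sgn A x))
        linarith
      · intro i hi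
        rw [hall i] at hi
        exact absurd hi (by decide)
      · intro i hi
        rw [hall i] at hi
        exact absurd hi (by decide)
  | succ d ih =>
    obtain ⟨e, hpos, hmono, hcov⟩ := ih
    by_cases hdt : t ≤ d
    · refine ⟨e, hpos, hmono, ?_⟩
      have h1 : t - (d + 1) = t - d := by omega
      rw [h1]; exact hcov
    · push_neg at hdt
      set j0 := t - (d + 1) with hj0
      have hj0succ : j0 + 1 = t - d := by omega
      set U := {x : Fin k → ℝ | SCov A S e (j0 + 1) x} with hUdef
      have hUopen : IsOpen U := isOpen_sCov A S e (j0 + 1)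
      have hcov' : ∀ x ∈ S, j0 + 1 ≤ signLevel (sgn A x) → x ∈ U := by
        intro x hx h
        have := hcov x hx (by omega)
        rwa [hUdef, Set.mem_setOf_eq, ← hj0succ] at *
        
      set D : Fin t → Set (Fin k → ℝ) := fun i =>
        (S \ U) ∩ {x | j0 ≤ ((Finset.univ.erase i).filter fun m => eval x (A m) = 0).card}
        with hDdef
      have hDcompact : ∀ i, IsCompact (D i) := fun i =>
        (hScompact.diff hUopen).inter_right (isClosed_levelSet A _ j0)
      have hDne : ∀ i, ∀ x ∈ D i, eval x (A i) ≠ 0 := by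
        intro i x hxD h0
        obtain ⟨⟨hxS, hxU⟩, hxlev⟩ := hxD
        apply hxU
        apply hcov' x hxS
        rw [signLevel_sgn]
        have hins : insert i ((Finset.univ.erase i).filter fun m => eval x (A m) = 0) ⊆
            Finset.univ.filter fun m => eval x (A m) = 0 := by
          intro m hm
          rcases Finset.mem_insert.mp hm with rfl | hm'
          · exact Finset.mem_filter.mpr ⟨Finset.mem_univ _, h0⟩
          · exact Finset.mem_filter.mpr ⟨Finset.mem_univ _, (Finset.mem_filter.mp hm').2⟩
        have hcard := Finset.card_le_card hins
        rw [Finset.card_insert_of_notMem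
          (fun hmem' => (Finset.mem_erase.mp (Finset.mem_filter.mp hmem').1).1 rfl)] at hcard
        have hxlev' : j0 ≤ ((Finset.univ.erase i).filter fun m => eval x (A m) = 0).card := hxlev
        omega
      have hη : ∀ i : Fin t, ∃ η : ℝ, 0 < η ∧ ∀ x ∈ D i, η ≤ |eval x (A i)| := by
        intro i
        rcases (D i).eq_empty_or_nonempty with hemp | hne
        · exact ⟨1, one_pos, by rw [hemp]; simp⟩
        · obtain ⟨x₀, hx₀, hmin⟩ := (hDcompact i).exists_isMinOn hne
            ((continuous_abs.comp (MvPolynomial.continuous_eval (A i))).continuousOn)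
          exact ⟨|eval x₀ (A i)|, abs_pos.mpr (hDne i x₀ hx₀), fun x hxm => hmin hxm⟩
      choose η hηpos hηle using hη
      have htpos : 0 < t := by omega
      haveI : Nonempty (Fin t) := ⟨⟨0, htpos⟩⟩
      set ηm := Finset.univ.inf' Finset.univ_nonempty η with hηm
      have hηmpos : 0 < ηm := by
        rw [hηm, Finset.lt_inf'_iff]
        exact fun i _ => hηpos i
      set c := min ηm (e (j0 + 1)) / 2 with hc
      have hcpos : 0 < c := half_pos (lt_min hηmpos (hpos _))
      have hclt1 : c < ηm := by
        have := min_le_left ηm (e (j0 + 1)); rw [hc]; linarith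
      have hclt2 : c < e (j0 + 1) := by
        have := min_le_right ηm (e (j0 + 1)); rw [hc]
        have := hpos (j0 + 1); linarith
      set e' : ℕ → ℝ := fun j => if j ≤ j0 then c / 2 ^ (j0 - j) else e j with he'
      have he'pos : ∀ j, 0 < e' j := by
        intro j; rw [he']; dsimp only
        split
        · positivity
        · exact hpos j
      have he'eq : ∀ j, j0 < j → e' j = e j := by
        intro j hj; rw [he']; dsimp only; rw [if_neg (by omega)]
      have he'j0 : e' j0 = c := by
        rw [he']; dsimp only; rw [if_pos le_rfl, Nat.sub_self, pow_zero, div_one]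
      have he'mono : ∀ j, e' j < e' (j + 1) := by
        intro j
        by_cases h1 : j + 1 ≤ j0
        · rw [he']; dsimp only
          rw [if_pos (by omega), if_pos h1]
          have h2 : j0 - j = (j0 - (j + 1)) + 1 := by omega
          rw [h2, pow_succ]
          have hp := pow_pos (by norm_num : (0:ℝ) < 2) (j0 - (j + 1))
          rw [div_lt_div_iff₀ (by positivity) hp]
          nlinarith
        · by_cases h2 : j ≤ j0
          · have hje : j = j0 := by omega
            rw [hje, he'j0, he'eq _ (by omega)]
            exact hclt2
          · rw [he'eq _ (by omega), he'eq _ (by omega)]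
            exact hmono j
      refine ⟨e', he'pos, he'mono, ?_⟩
      intro x hx hlev
      by_cases hxU : x ∈ U
      · obtain ⟨σ, h1, h2, h3, h4, h5⟩ := hxU
        have hE : e' (signLevel σ) = e (signLevel σ) := he'eq _ (by omega)
        exact ⟨σ, h1, by omega, fun i hi => hE ▸ h3 i hi, fun i hi => hE ▸ h4 i hi,
          fun i hi => hE ▸ h5 i hi⟩
      · have hlevle : signLevel (sgn A x) ≤ j0 := by
          by_contra hgt
          push_neg at hgt
          exact hxU (hcov' x hx hgt)
        have hleveq : signLevel (sgn A x) = j0 := le_antisymm hlevle hlev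
        have hE0 : e' (signLevel (sgn A x)) = c := by rw [hleveq, he'j0]
        have hmemD : ∀ i, eval x (A i) ≠ 0 → x ∈ D i := by
          intro i hne0
          refine ⟨⟨hx, hxU⟩, ?_⟩
          have hsub : (Finset.univ.filter fun m => eval x (A m) = 0) ⊆
              (Finset.univ.erase i).filter fun m => eval x (A m) = 0 := by
            intro m hm
            have hm' := Finset.mem_filter.mp hm
            refine Finset.mem_filter.mpr ⟨Finset.mem_erase.mpr ⟨?_, Finset.mem_univ _⟩, hm'.2⟩
            rintro rfl
            exact hne0 hm'.2
          have hcard := Finset.card_le_card hsub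
          have := signLevel_sgn A x
          simp only [Set.mem_setOf_eq]
          omega
        have hclow : ∀ i, eval x (A i) ≠ 0 → c < |eval x (A i)| := by
          intro i hne0
          have h1 : ηm ≤ η i := Finset.inf'_le _ (Finset.mem_univ i)
          have h2 := hηle i x (hmemD i hne0)
          linarith
        refine ⟨sgn A x, hmem x hx, hleveq.ge, ?_, ?_, ?_⟩
        · intro i hi
          have h0 : eval x (A i) = 0 := sign_eq_zero_iff.mp hi
          rw [h0, abs_zero, hE0]
          linarith
        · intro i hi
          have hgt : 0 < eval x (A i) := sign_eq_one_iff.mp hi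
          have := hclow i hgt.ne'
          rw [abs_of_pos hgt] at this
          rw [hE0]; exact this
        · intro i hi
          have hlt : eval x (A i) < 0 := sign_eq_neg_one_iff.mp hi
          have := hclow i hlt.ne
          rw [abs_of_neg hlt] at this
          rw [hE0]; linarith

end SignCovering

/-- Covering property: if `S ⊆ ℝ^k` is closed, bounded, and is the union of the realizations of
the sign conditions in `Sign(A,S)`, then there are reals `0 < ε_1 < ε_2 < ⋯ < ε_{2t}` such that
`S` is the union of the sets `R(σ_-^+)`, `σ ∈ Sign(A,S)`. -/
theorem covering_by_shrunk_sign_conditions {k t : ℕ}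
    (A : Fin t → MvPolynomial (Fin k) ℝ) (S : Set (Fin k → ℝ))
    (hSclosed : IsClosed S) (hSbdd : Bornology.IsBounded S)
    (hScover : S = ⋃ σ ∈ signCondOn A S, signRealization A σ) :
    ∃ ε : ℕ → ℝ, 0 < ε 1 ∧ (∀ i, 1 ≤ i → i < 2 * t → ε i < ε (i + 1)) ∧
      S = ⋃ σ ∈ signCondOn A S, signShrunkRealization A S ε σ := by
  classical
  have hScompact : IsCompact S := Metric.isCompact_of_isClosed_isBounded hSclosed hSbdd
  have hmem : ∀ x ∈ S, SignCovering.sgn A x ∈ signCondOn A S :=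
    fun x hx => SignCovering.sgn_mem hScover hx
  obtain ⟨e, hpos, hmono, hcov⟩ := SignCovering.key A S hScompact hmem t
  simp only [Nat.sub_self] at hcov
  refine ⟨fun n => if Even n then e (n / 2) else (e (n / 2) + e (n / 2 + 1)) / 2, ?_, ?_, ?_⟩
  · have h1 : ¬ Even 1 := by decide
    dsimp only
    rw [if_neg h1]
    have h0 := hpos (1 / 2)
    have h0' := hpos (1 / 2 + 1)
    linarith
  · intro i _ _
    rcases Nat.even_or_odd i with he | ho
    · obtain ⟨m, rfl⟩ := he
      have hne : ¬ Even (m + m + 1) := by rintro ⟨r, hr⟩; omega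
      have hev : Even (m + m) := ⟨m, rfl⟩
      dsimp only
      rw [if_pos hev, if_neg hne]
      have hm2 : (m + m) / 2 = m := by omega
      have hm3 : (m + m + 1) / 2 = m := by omega
      rw [hm2, hm3]
      have := hmono m
      linarith
    · obtain ⟨m, rfl⟩ := ho
      have hne : ¬ Even (2 * m + 1) := by rintro ⟨r, hr⟩; omega
      have hev : Even (2 * m + 1 + 1) := ⟨m + 1, by omega⟩
      dsimp only
      rw [if_neg hne, if_pos hev]
      have h2 : (2 * m + 1) / 2 = m := by omega
      have h3 : (2 * m + 1 + 1) / 2 = m + 1 := by omega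
      rw [h2, h3]
      have := hmono m
      linarith
  · apply Set.Subset.antisymm
    · intro x hx
      obtain ⟨σ, hσmem, -, h0, h1, h2⟩ := hcov x hx (Nat.zero_le _)
      refine Set.mem_biUnion hσmem ?_
      refine ⟨hx, ?_, ?_, ?_⟩
      · intro i hi
        have hj1 : 1 ≤ signLevel σ :=
          Finset.card_pos.mpr ⟨i, Finset.mem_filter.mpr ⟨Finset.mem_univ _, hi⟩⟩
        have hsub : 2 * signLevel σ - 1 = 2 * (signLevel σ - 1) + 1 := by omega
        have hne : ¬ Even (2 * (signLevel σ - 1) + 1) := by rintro ⟨r, hr⟩; omega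
        dsimp only
        rw [hsub, if_neg hne]
        have hq : (2 * (signLevel σ - 1) + 1) / 2 = signLevel σ - 1 := by omega
        have hq2 : signLevel σ - 1 + 1 = signLevel σ := by omega
        rw [hq, hq2]
        have ha := h0 i hi
        have hb := hpos (signLevel σ - 1)
        linarith
      · intro i hi
        have hev : Even (2 * signLevel σ) := ⟨signLevel σ, by omega⟩
        dsimp only
        rw [if_pos hev]
        have hq : 2 * signLevel σ / 2 = signLevel σ := by omega
        rw [hq]
        exact (h1 i hi).le
      · intro i hi
        have hev : Even (2 * signLevel σ) := ⟨signLevel σ, by omega⟩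
        dsimp only
        rw [if_pos hev]
        have hq : 2 * signLevel σ / 2 = signLevel σ := by omega
        rw [hq]
        exact (h2 i hi).le
    · intro x hx
      simp only [Set.mem_iUnion] at hx
      obtain ⟨σ, hσ, hxσ⟩ := hx
      exact hxσ.1
end

section
/- Let P_1,…,P_s ∈ ℝ[X_1,…,X_k], let d' be an even integer strictly greater than the degree of every P_i, and for 1 ≤ i ≤ s let H_i = 1 + Σ_{j=1}^k i^j X_j^{d'}. Then there exists δ_0 > 0 such that for every δ with 0 < δ < δ_0, the family P*(δ) = {P_i − δH_i : 1 ≤ i ≤ s} ∪ {P_i + δH_i : 1 ≤ i ≤ s} is in general position in ℝ^k: any k+1 pairwise distinct polynomials of P*(δ) have no common zero in ℝ^k. -/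
open MvPolynomial Set

open Filter in
/-- Auxiliary: pointwise evaluation of a multivariate polynomial commutes with passing
to germs along a filter. -/
lemma germ_eval_eq {k : ℕ} (φ : Ultrafilter ℕ) (x : ℕ → Fin k → ℝ)
    (Q : MvPolynomial (Fin k) ℝ) :
    ((fun n => eval (x n) Q : ℕ → ℝ) : Germ (φ : Filter ℕ) ℝ) =
      eval₂ ((Filter.Germ.coeRingHom (φ : Filter ℕ)).comp (Pi.constRingHom ℕ ℝ))
        (fun j => ((fun n => x n j : ℕ → ℝ) : Germ (φ : Filter ℕ) ℝ)) Q := by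
  have h1 : (fun n => eval (x n) Q) =
      eval₂ (Pi.constRingHom ℕ ℝ) (fun j => (fun n => x n j)) Q := by
    funext n
    have h := MvPolynomial.eval₂_comp_left (Pi.evalRingHom (fun _ : ℕ => ℝ) n)
      (Pi.constRingHom ℕ ℝ) (fun j => (fun n => x n j)) Q
    have h2 : (Pi.evalRingHom (fun _ : ℕ => ℝ) n).comp (Pi.constRingHom ℕ ℝ) =
        RingHom.id ℝ := RingHom.ext fun r => rfl
    rw [h2] at h
    rw [MvPolynomial.eval₂_id] at h
    exact h.symm
  rw [h1]
  exact MvPolynomial.eval₂_comp_left (Filter.Germ.coeRingHom (φ : Filter ℕ))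
    (Pi.constRingHom ℕ ℝ) (fun j => (fun n => x n j)) Q

open Filter in
/-- Auxiliary: same for one-variable polynomials. -/
lemma germ_eval_poly {φ : Ultrafilter ℕ} (y : ℕ → ℝ) (q : Polynomial ℝ) :
    ((fun n => q.eval (y n) : ℕ → ℝ) : Germ (φ : Filter ℕ) ℝ) =
      q.eval₂ ((Filter.Germ.coeRingHom (φ : Filter ℕ)).comp (Pi.constRingHom ℕ ℝ))
        ((y : ℕ → ℝ) : Germ (φ : Filter ℕ) ℝ) := by
  have h1 : (fun n => q.eval (y n)) = q.eval₂ (Pi.constRingHom ℕ ℝ) y := by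
    funext n
    have h := Polynomial.hom_eval₂ q (Pi.constRingHom ℕ ℝ)
      (Pi.evalRingHom (fun _ : ℕ => ℝ) n) y
    have h2 : (Pi.evalRingHom (fun _ : ℕ => ℝ) n).comp (Pi.constRingHom ℕ ℝ) =
        RingHom.id ℝ := RingHom.ext fun r => rfl
    rw [h2] at h
    exact h.symm
  rw [h1]
  exact Polynomial.hom_eval₂ q (Pi.constRingHom ℕ ℝ) (Filter.Germ.coeRingHom (φ : Filter ℕ)) y

/-- Auxiliary: in a valuation subring one can normalize a finite family:
there is `t ∈ V` with `ξ j * t ∈ V` for all `j`, and either `t = 1` or some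
normalized coordinate equals `1`. -/
lemma valuation_normalize {E : Type*} [Field E] (V : ValuationSubring E) {k : ℕ}
    (ξ : Fin k → E) :
    ∃ (t : E) (w : Fin k → E), t ∈ V ∧ (∀ j, w j ∈ V) ∧ (∀ j, ξ j * t = w j) ∧
      (t = 1 ∨ ∃ j₀, w j₀ = 1) := by
  classical
  by_cases hall : ∀ j, ξ j ∈ V
  · exact ⟨1, ξ, one_mem V, hall, fun j => mul_one _, Or.inl rfl⟩
  push_neg at hall
  obtain ⟨j₁, hj₁⟩ := hall
  have key : ∀ S : Finset (Fin k), ∀ j₁ ∈ S, ξ j₁ ∉ V →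
      ∃ j₀ ∈ S, ξ j₀ ∉ V ∧ ∀ j ∈ S, ξ j * (ξ j₀)⁻¹ ∈ V := by
    intro S
    induction S using Finset.induction_on with
    | empty => simp
    | @insert a S' ha ih =>
      intro jx hjx hξjx
      by_cases hS' : ∃ j ∈ S', ξ j ∉ V
      · obtain ⟨j', hj'S, hj'⟩ := hS'
        obtain ⟨j₀, hj₀S, hj₀, hrest⟩ := ih j' hj'S hj'
        have hj₀0 : ξ j₀ ≠ 0 := fun h => hj₀ (by rw [h]; exact zero_mem _)
        by_cases hav : ξ a * (ξ j₀)⁻¹ ∈ V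
        · refine ⟨j₀, Finset.mem_insert_of_mem hj₀S, hj₀, ?_⟩
          intro j hj
          rcases Finset.mem_insert.mp hj with rfl | hj
          · exact hav
          · exact hrest j hj
        · have ha0 : ξ a ≠ 0 := by
            intro h
            exact hav (by rw [h, zero_mul]; exact zero_mem _)
          have hinv : (ξ a * (ξ j₀)⁻¹)⁻¹ ∈ V := (V.mem_or_inv_mem _).resolve_left hav
          have hrew : (ξ a * (ξ j₀)⁻¹)⁻¹ = ξ j₀ * (ξ a)⁻¹ := by
            field_simp
          have haV : ξ a ∉ V := fun hmem =>
            hav (mul_mem hmem ((V.mem_or_inv_mem (ξ j₀)).resolve_left hj₀))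
          refine ⟨a, Finset.mem_insert_self _ _, haV, ?_⟩
          intro j hj
          rcases Finset.mem_insert.mp hj with rfl | hjS'
          · rw [mul_inv_cancel₀ ha0]; exact one_mem _
          · have hfac : ξ j * (ξ a)⁻¹ = (ξ j * (ξ j₀)⁻¹) * (ξ j₀ * (ξ a)⁻¹) := by
              field_simp
            rw [hfac, ← hrew]
            exact mul_mem (hrest j hjS') hinv
      · push_neg at hS'
        have hja : jx = a := by
          rcases Finset.mem_insert.mp hjx with h | h
          · exact h
          · exact absurd (hS' jx h) hξjx
        subst hja
        have ha0 : ξ jx ≠ 0 := fun h => hξjx (by rw [h]; exact zero_mem _)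
        have hainv : (ξ jx)⁻¹ ∈ V := (V.mem_or_inv_mem _).resolve_left hξjx
        refine ⟨jx, Finset.mem_insert_self _ _, hξjx, ?_⟩
        intro j hj
        rcases Finset.mem_insert.mp hj with rfl | hjS'
        · rw [mul_inv_cancel₀ ha0]; exact one_mem _
        · exact mul_mem (hS' j hjS') hainv
  obtain ⟨j₀, _, hj₀, hrest⟩ := key Finset.univ j₁ (Finset.mem_univ _) hj₁
  have hj₀0 : ξ j₀ ≠ 0 := fun h => hj₀ (by rw [h]; exact zero_mem _)
  exact ⟨(ξ j₀)⁻¹, fun j => ξ j * (ξ j₀)⁻¹, (V.mem_or_inv_mem _).resolve_left hj₀,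
    fun j => hrest j (Finset.mem_univ _), fun j => rfl,
    Or.inr ⟨j₀, mul_inv_cancel₀ hj₀0⟩⟩

/-- Auxiliary: if `deg Q ≤ d'` and `ξ j * t = w j` with `t, w j ∈ V`, then
`eval₂ ι ξ Q * t ^ d' ∈ V`. -/
lemma eval_mul_pow_mem {E : Type*} [Field E] (V : ValuationSubring E) (ι : ℝ →+* E)
    (hι : ∀ r, ι r ∈ V) {k d' : ℕ} {ξ : Fin k → E} {t : E} {w : Fin k → E}
    (ht : t ∈ V) (hw : ∀ j, w j ∈ V) (hwt : ∀ j, ξ j * t = w j)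
    (Q : MvPolynomial (Fin k) ℝ) (hdeg : Q.totalDegree ≤ d') :
    eval₂ ι ξ Q * t ^ d' ∈ V := by
  classical
  rw [MvPolynomial.eval₂_eq', Finset.sum_mul]
  refine sum_mem fun α hα => ?_
  have hle : (∑ j, α j) ≤ d' := by
    refine le_trans ?_ hdeg
    have := MvPolynomial.le_totalDegree hα
    rwa [Finsupp.sum_fintype _ _ (fun _ => rfl)] at this
  have key : (∏ j, ξ j ^ α j) * t ^ d' = (∏ j, w j ^ α j) * t ^ (d' - ∑ j, α j) := by
    calc (∏ j, ξ j ^ α j) * t ^ d'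
        = (∏ j, ξ j ^ α j) * (t ^ (∑ j, α j) * t ^ (d' - ∑ j, α j)) := by
          rw [← pow_add, Nat.add_sub_cancel' hle]
      _ = ((∏ j, ξ j ^ α j) * ∏ j, t ^ α j) * t ^ (d' - ∑ j, α j) := by
          rw [Finset.prod_pow_eq_pow_sum]; ring
      _ = (∏ j, (ξ j * t) ^ α j) * t ^ (d' - ∑ j, α j) := by
          rw [← Finset.prod_mul_distrib]; simp_rw [mul_pow]
      _ = (∏ j, w j ^ α j) * t ^ (d' - ∑ j, α j) := by simp_rw [hwt]
  rw [mul_assoc, key, ← mul_assoc]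
  exact mul_mem (mul_mem (hι _) (prod_mem fun j _ => pow_mem (hw j) _)) (pow_mem ht _)

/-- The core valuation-theoretic contradiction: if `d ∉ V`, the `k+1` perturbation
equations with distinct Vandermonde parameters cannot hold. -/
lemma core_contradiction {E : Type*} [Field E] (V : ValuationSubring E) (ι : ℝ →+* E)
    (hι : ∀ r, ι r ∈ V) (d : E) (hd : d ∉ V) {k d' : ℕ} (ξ : Fin k → E)
    (a : Fin (k + 1) → ℕ) (ha : Function.Injective a)
    (P' : Fin (k + 1) → MvPolynomial (Fin k) ℝ) (hdeg : ∀ m, (P' m).totalDegree < d')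
    (σ : Fin (k + 1) → ℝ) (hσ : ∀ m, σ m * σ m = 1)
    (heq : ∀ m, eval₂ ι ξ (P' m) =
      ι (σ m) * (d * (1 + ∑ j : Fin k, ι ((a m : ℝ) ^ ((j : ℕ) + 1)) * ξ j ^ d'))) :
    False := by
  classical
  obtain ⟨t, w, ht, hw, hwt, hcase⟩ := valuation_normalize V ξ
  set A : Fin (k + 1) → E :=
    fun m => t ^ d' + ∑ j : Fin k, ι ((a m : ℝ) ^ ((j : ℕ) + 1)) * w j ^ d' with hA
  have hAmem : ∀ m, A m ∈ V := fun m =>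
    add_mem (pow_mem ht _) (sum_mem fun j _ => mul_mem (hι _) (pow_mem (hw j) _))
  have hσι : ∀ m, ι (σ m) * ι (σ m) = 1 := by
    intro m; rw [← map_mul, hσ m, map_one]
  have hdA : ∀ m, d * A m = ι (σ m) * (eval₂ ι ξ (P' m) * t ^ d') := by
    intro m
    have e1 : (1 + ∑ j : Fin k, ι ((a m : ℝ) ^ ((j : ℕ) + 1)) * ξ j ^ d') * t ^ d' = A m := by
      rw [hA, add_mul, one_mul, Finset.sum_mul]
      congr 1
      refine Finset.sum_congr rfl fun j _ => ?_
      rw [mul_assoc, ← mul_pow, hwt j]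
    rw [heq m, ← e1]
    have h1 := hσι m
    set S := 1 + ∑ j : Fin k, ι ((a m : ℝ) ^ ((j : ℕ) + 1)) * ξ j ^ d'
    linear_combination (-(d * S * t ^ d')) * h1
  have hAnon : ∀ m, (⟨A m, hAmem m⟩ : V) ∈ IsLocalRing.maximalIdeal V := by
    intro m
    rw [IsLocalRing.mem_maximalIdeal, mem_nonunits_iff]
    intro hunit
    apply hd
    obtain ⟨b, hb⟩ := isUnit_iff_exists_inv.mp hunit
    have hbE : A m * (b : E) = 1 := by
      have := congrArg (Subtype.val) hb
      push_cast at this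
      exact_mod_cast this
    have hdexp : d = (ι (σ m) * (eval₂ ι ξ (P' m) * t ^ d')) * b := by
      calc d = d * (A m * b) := by rw [hbE, mul_one]
        _ = (d * A m) * b := by ring
        _ = (ι (σ m) * (eval₂ ι ξ (P' m) * t ^ d')) * b := by rw [hdA m]
    rw [hdexp]
    exact mul_mem (mul_mem (hι _)
      (eval_mul_pow_mem V ι hι ht hw hwt _ (le_of_lt (hdeg m)))) b.2
  -- pass to the residue field
  let κ := IsLocalRing.ResidueField V
  let π : V →+* κ := IsLocalRing.residue V
  let ιV : ℝ →+* V := ι.codRestrict V.toSubring hι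
  let ρ : ℝ →+* κ := π.comp ιV
  let v : Fin (k + 1) → κ := Fin.cons (π ⟨t, ht⟩ ^ d') (fun j => π ⟨w j, hw j⟩ ^ d')
  have hsys : ∀ m, ∑ l : Fin (k + 1), (ρ (a m : ℝ)) ^ (l : ℕ) * v l = 0 := by
    intro m
    have h0 : π ⟨A m, hAmem m⟩ = 0 :=
      (IsLocalRing.residue_eq_zero_iff _).mpr (hAnon m)
    have hdec : (⟨A m, hAmem m⟩ : V) =
        ⟨t, ht⟩ ^ d' + ∑ j : Fin k, ιV ((a m : ℝ) ^ ((j : ℕ) + 1)) * ⟨w j, hw j⟩ ^ d' := by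
      apply Subtype.ext
      push_cast
      rfl
    rw [Fin.sum_univ_succ]
    simp only [Fin.cons_zero, Fin.cons_succ, Fin.val_zero, pow_zero, one_mul, v]
    rw [← h0, hdec, map_add, map_pow, map_sum]
    congr 1
    refine Finset.sum_congr rfl fun j _ => ?_
    rw [map_mul, map_pow]
    congr 1
  have hbinj : Function.Injective (fun m => ρ (a m : ℝ)) := by
    intro m m' h
    apply ha
    have hρ : Function.Injective ρ := ρ.injective
    have := hρ h
    exact_mod_cast this
  have hv0 : v = 0 := Matrix.eq_zero_of_forall_index_sum_pow_mul_eq_zero hbinj hsys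
  have hone : (1 : κ) ≠ 0 := one_ne_zero
  rcases hcase with ht1 | ⟨j₀, hj₀⟩
  · have : v 0 = 1 := by
      have : (⟨t, ht⟩ : V) = 1 := Subtype.ext ht1
      simp only [v, Fin.cons_zero, this, map_one, one_pow]
    rw [hv0] at this
    exact hone this.symm
  · have : v j₀.succ = 1 := by
      have : (⟨w j₀, hw j₀⟩ : V) = 1 := Subtype.ext hj₀
      simp only [v, Fin.cons_succ, this, map_one, one_pow]
    rw [hv0] at this
    exact hone this.symm

/-- Auxiliary: existence of a valuation subring containing the base field but
excluding a transcendental element. -/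
lemma exists_valuation_excluding {E : Type*} [Field E] (ι : ℝ →+* E) (d e : E)
    (hde : d * e = 1)
    (htr : ∀ q : Polynomial ℝ, q ≠ 0 → Polynomial.eval₂ ι e q ≠ 0) :
    ∃ V : ValuationSubring E, (∀ r, ι r ∈ V) ∧ d ∉ V := by
  classical
  have hprime : (Ideal.span {(Polynomial.X : Polynomial ℝ)}).IsPrime :=
    (Ideal.span_singleton_prime Polynomial.X_ne_zero).mpr Polynomial.prime_X
  letI := hprime
  set P : Ideal (Polynomial ℝ) := Ideal.span {(Polynomial.X : Polynomial ℝ)} with hP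
  let L := Localization.AtPrime P
  have hunit : ∀ y : P.primeCompl, IsUnit ((Polynomial.eval₂RingHom ι e) (y : Polynomial ℝ)) := by
    intro y
    rw [isUnit_iff_ne_zero]
    simp only [Polynomial.coe_eval₂RingHom]
    apply htr
    intro h0
    exact y.2 (h0 ▸ Ideal.zero_mem P)
  let f : L →+* E := IsLocalization.lift (M := P.primeCompl) (S := L) hunit
  obtain ⟨V, hmem, hloc⟩ := IsLocalRing.exists_factor_valuationRing f
  refine ⟨V, ?_, ?_⟩
  · intro r
    have : ι r = f (algebraMap (Polynomial ℝ) L (Polynomial.C r)) := by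
      show ι r = IsLocalization.lift hunit (algebraMap (Polynomial ℝ) L (Polynomial.C r))
      rw [IsLocalization.lift_eq]
      simp
    rw [this]
    exact hmem _
  · intro hdV
    have hXmax : algebraMap (Polynomial ℝ) L Polynomial.X ∈ IsLocalRing.maximalIdeal L :=
      (IsLocalization.AtPrime.to_map_mem_maximal_iff L P _).mpr
        (Ideal.mem_span_singleton_self _)
    have hfX : f (algebraMap (Polynomial ℝ) L Polynomial.X) = e := by
      show IsLocalization.lift hunit (algebraMap (Polynomial ℝ) L Polynomial.X) = e
      rw [IsLocalization.lift_eq]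
      simp
    have hXunit : IsUnit ((f.codRestrict V.toSubring hmem)
        (algebraMap (Polynomial ℝ) L Polynomial.X)) := by
      rw [isUnit_iff_exists_inv]
      refine ⟨⟨d, hdV⟩, Subtype.ext ?_⟩
      show f (algebraMap (Polynomial ℝ) L Polynomial.X) * d = 1
      rw [hfX, mul_comm]
      exact hde
    have := hloc.map_nonunit _ hXunit
    exact (IsLocalRing.mem_maximalIdeal _).mp hXmax this

/-- Auxiliary extraction: a vanishing `(k+1)`-element subfamily gives `k+1` distinct
indices and signs. -/
lemma extract_indices {k s d' : ℕ} (hd'even : Even d')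
    (P H : Fin s → MvPolynomial (Fin k) ℝ)
    (hH : ∀ i, H i = 1 + ∑ j : Fin k,
      (C ((((i : ℕ) + 1) ^ ((j : ℕ) + 1) : ℕ) : ℝ) * (X j) ^ d'))
    (δ : ℝ) (hδ : 0 < δ) (F : Finset (MvPolynomial (Fin k) ℝ))
    (hsub : ↑F ⊆ {Q | ∃ i : Fin s, Q = P i - C δ * H i ∨ Q = P i + C δ * H i})
    (hcard : F.card = k + 1) (x : Fin k → ℝ) (hvan : ∀ Q ∈ F, eval x Q = 0) :
    ∃ (ifun : Fin (k + 1) → Fin s) (σ : Fin (k + 1) → Bool), Function.Injective ifun ∧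
      ∀ m, eval x (P (ifun m)) =
        (if σ m then (1 : ℝ) else -1) * (δ * eval x (H (ifun m))) := by
  classical
  have hHpos : ∀ i, 0 < eval x (H i) := by
    intro i
    rw [hH i]
    rw [map_add, map_one, map_sum]
    have hnn : 0 ≤ ∑ j : Fin k,
        eval x (C ((((i : ℕ) + 1) ^ ((j : ℕ) + 1) : ℕ) : ℝ) * (X j) ^ d') := by
      refine Finset.sum_nonneg fun j _ => ?_
      rw [map_mul, eval_C, map_pow, eval_X]
      exact mul_nonneg (Nat.cast_nonneg _) (hd'even.pow_nonneg _)
    linarith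
  let e := F.equivFinOfCardEq hcard
  let Qm : Fin (k + 1) → MvPolynomial (Fin k) ℝ := fun m => (e.symm m : _)
  have hQmem : ∀ m, Qm m ∈ F := fun m => (e.symm m).2
  have hQinj : Function.Injective Qm := fun m m' h =>
    e.symm.injective (Subtype.ext h)
  have hspec : ∀ m, ∃ i, Qm m = P i - C δ * H i ∨ Qm m = P i + C δ * H i :=
    fun m => hsub (hQmem m)
  choose ifun hifun using hspec
  let σ : Fin (k + 1) → Bool :=
    fun m => if Qm m = P (ifun m) - C δ * H (ifun m) then true else false
  have hkey : ∀ m, (σ m = true ∧ Qm m = P (ifun m) - C δ * H (ifun m)) ∨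
      (σ m = false ∧ Qm m = P (ifun m) + C δ * H (ifun m)) := by
    intro m
    by_cases h : Qm m = P (ifun m) - C δ * H (ifun m)
    · exact Or.inl ⟨by simp [σ, h], h⟩
    · exact Or.inr ⟨by simp [σ, h], (hifun m).resolve_left h⟩
  have heval : ∀ m, eval x (P (ifun m)) =
      (if σ m then (1 : ℝ) else -1) * (δ * eval x (H (ifun m))) := by
    intro m
    have h0 : eval x (Qm m) = 0 := hvan _ (hQmem m)
    rcases hkey m with ⟨hb, hQ⟩ | ⟨hb, hQ⟩
    · rw [hQ, map_sub, map_mul, eval_C] at h0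
      rw [hb]
      simp only [if_pos rfl, ite_true, one_mul]
      linarith
    · rw [hQ, map_add, map_mul, eval_C] at h0
      rw [hb]
      simp only [Bool.false_eq_true, ite_false]
      linarith
  refine ⟨ifun, σ, ?_, heval⟩
  intro m m' h
  by_contra hne
  have hQne : Qm m ≠ Qm m' := fun hq => hne (hQinj hq)
  have e1 := heval m
  have e2 := heval m'
  rw [h] at e1
  have hHp := hHpos (ifun m')
  rcases hkey m with ⟨hb, hQ⟩ | ⟨hb, hQ⟩ <;> rcases hkey m' with ⟨hb', hQ'⟩ | ⟨hb', hQ'⟩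
  · exact hQne (by rw [hQ, hQ', h])
  · rw [hb] at e1; rw [hb'] at e2
    simp only [ite_true, Bool.false_eq_true, ite_false, one_mul] at e1 e2
    nlinarith
  · rw [hb] at e1; rw [hb'] at e2
    simp only [ite_true, Bool.false_eq_true, ite_false, one_mul] at e1 e2
    nlinarith
  · exact hQne (by rw [hQ, hQ', h])

open Filter in
/-- Let `P_1,…,P_s ∈ ℝ[X_1,…,X_k]`, let `d'` be an even integer strictly greater than all
their degrees, and `H_i = 1 + ∑_{j=1}^k i^j X_j^{d'}`.  Then for all sufficiently small
`δ > 0` the family `P*(δ) = {P_i - δH_i} ∪ {P_i + δH_i}` is in general position in `ℝ^k`: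
any `k+1` pairwise distinct polynomials of `P*(δ)` have no common zero in `ℝ^k`. -/
theorem perturbed_family_general_position {k s : ℕ}
    (P : Fin s → MvPolynomial (Fin k) ℝ) (d' : ℕ)
    (hd'even : Even d') (hd' : ∀ i, (P i).totalDegree < d')
    (H : Fin s → MvPolynomial (Fin k) ℝ)
    (hH : ∀ i, H i = 1 + ∑ j : Fin k,
      (C ((((i : ℕ) + 1) ^ ((j : ℕ) + 1) : ℕ) : ℝ) * (X j) ^ d')) :
    ∃ δ₀ > (0 : ℝ), ∀ δ : ℝ, 0 < δ → δ < δ₀ →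
      ∀ F : Finset (MvPolynomial (Fin k) ℝ),
        (↑F ⊆ {Q | ∃ i : Fin s, Q = P i - C δ * H i ∨ Q = P i + C δ * H i}) →
        F.card = k + 1 →
        ∀ x : Fin k → ℝ, ∃ Q ∈ F, eval x Q ≠ 0 := by
  classical
  by_contra hcon
  push_neg at hcon
  have hsel : ∀ n : ℕ, ∃ δ : ℝ, 0 < δ ∧ δ < 1 / (n + 1) ∧
      ∃ F : Finset (MvPolynomial (Fin k) ℝ),
        (↑F ⊆ {Q | ∃ i : Fin s, Q = P i - C δ * H i ∨ Q = P i + C δ * H i}) ∧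
        F.card = k + 1 ∧ ∃ x : Fin k → ℝ, ∀ Q ∈ F, eval x Q = 0 := by
    intro n
    obtain ⟨δ, hδ0, hδlt, F, hFsub, hFcard, x, hx⟩ := hcon (1 / (n + 1)) (by positivity)
    exact ⟨δ, hδ0, hδlt, F, hFsub, hFcard, x, hx⟩
  choose δ hδpos hδlt Fn hFsub hFcard xn hvan using hsel
  choose ifn σn hinj heval using fun n =>
    extract_indices hd'even P H hH (δ n) (hδpos n) (Fn n) (hFsub n) (hFcard n)
      (xn n) (hvan n)
  set φ : Ultrafilter ℕ := Filter.hyperfilter ℕ with hφ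
  -- pigeonhole: fix the data on a large set
  have hpigeon : ∃ z : (Fin (k + 1) → Fin s) × (Fin (k + 1) → Bool),
      {n | (ifn n, σn n) = z} ∈ φ := by
    by_contra h
    push_neg at h
    have hcompl : ∀ z, {n | (ifn n, σn n) = z}ᶜ ∈ φ :=
      fun z => Ultrafilter.compl_mem_iff_notMem.mpr (h z)
    have hinter : (⋂ z, {n | (ifn n, σn n) = z}ᶜ) ∈ (φ : Filter ℕ) := by
      rw [Filter.iInter_mem]
      exact hcompl
    have : (⋂ z, {n | (ifn n, σn n) = z}ᶜ) = ∅ := by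
      ext n
      simp only [Set.mem_iInter, Set.mem_compl_iff, Set.mem_setOf_eq, Set.mem_empty_iff_false,
        iff_false, not_forall, not_not]
      exact ⟨(ifn n, σn n), rfl⟩
    rw [this] at hinter
    exact Filter.empty_notMem (φ : Filter ℕ) hinter
  obtain ⟨z, hz⟩ := hpigeon
  obtain ⟨n₀, hn₀⟩ := Ultrafilter.nonempty_of_mem hz
  -- the ultrapower
  let E := Germ (φ : Filter ℕ) ℝ
  let ι : ℝ →+* E := (Filter.Germ.coeRingHom (φ : Filter ℕ)).comp (Pi.constRingHom ℕ ℝ)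
  let dG : E := ((δ : ℕ → ℝ) : E)
  let eG : E := ((fun n => (δ n)⁻¹ : ℕ → ℝ) : E)
  have hde : dG * eG = 1 := by
    have hev : (fun n => δ n * (δ n)⁻¹) =ᶠ[(φ : Filter ℕ)] (fun _ => 1) :=
      Filter.Eventually.of_forall fun n => mul_inv_cancel₀ (hδpos n).ne'
    calc dG * eG = ((fun n => δ n * (δ n)⁻¹ : ℕ → ℝ) : E) := (Germ.coe_mul _ _).symm
      _ = ((fun _ => 1 : ℕ → ℝ) : E) := Germ.coe_eq.mpr hev
      _ = 1 := Germ.coe_one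
  have htr : ∀ q : Polynomial ℝ, q ≠ 0 → Polynomial.eval₂ ι eG q ≠ 0 := by
    intro q hq h0
    have heq2 : ((fun n => q.eval ((δ n)⁻¹) : ℕ → ℝ) : E) = 0 := by
      rw [germ_eval_poly]
      exact h0
    have hev : ∀ᶠ n in (φ : Filter ℕ), q.eval ((δ n)⁻¹) = 0 :=
      Germ.coe_eq.mp (heq2.trans (Germ.coe_zero (l := (φ : Filter ℕ))).symm)
    have hfin : {n | q.eval ((δ n)⁻¹) = 0}.Finite := by
      have hsub2 : {n | q.eval ((δ n)⁻¹) = 0} ⊆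
          ⋃ r ∈ q.roots.toFinset, {n | (δ n)⁻¹ = r} := by
        intro n hn
        simp only [Set.mem_iUnion]
        refine ⟨(δ n)⁻¹, ?_, rfl⟩
        simp only [Multiset.mem_toFinset, Polynomial.mem_roots', ne_eq]
        exact ⟨hq, hn⟩
      refine Set.Finite.subset (Set.Finite.biUnion (Finset.finite_toSet _) ?_) hsub2
      intro r _
      refine Set.Finite.subset (Set.finite_Iio (⌈r⌉₊ : ℕ)) ?_
      intro n hn
      simp only [Set.mem_setOf_eq] at hn
      have hδn : δ n = r⁻¹ := by rw [← hn, inv_inv]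
      have h1 : δ n < 1 / (n + 1) := hδlt n
      have hpos : (0 : ℝ) < (n : ℝ) + 1 := by positivity
      have h2 : ((n : ℝ) + 1) * δ n < 1 := by
        have := (lt_div_iff₀ hpos).mp h1
        nlinarith
      have h3 : (n : ℝ) + 1 < 1 / δ n := by
        rw [lt_div_iff₀ (hδpos n)]
        linarith [h2]
      have h4 : 1 / δ n = r := by rw [hδn, one_div, inv_inv]
      have h5 : (n : ℝ) < r := by rw [← h4]; linarith
      exact Set.mem_Iio.mpr (Nat.lt_ceil.mpr h5)
    exact (Set.Finite.notMem_hyperfilter hfin) hev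
  obtain ⟨V, hιV, hdV⟩ := exists_valuation_excluding ι dG eG hde htr
  set ξ : Fin k → E := fun j => ((fun n => xn n j : ℕ → ℝ) : E) with hξ
  have hn₀' : (ifn n₀, σn n₀) = z := hn₀
  have hz1 : ifn n₀ = z.1 := congrArg Prod.fst hn₀'
  refine core_contradiction V ι hιV dG hdV ξ (fun m => (z.1 m : ℕ) + 1) ?_
    (fun m => P (z.1 m)) (fun m => hd' _)
    (fun m => if z.2 m then (1 : ℝ) else -1) ?_ ?_
  · -- injectivity
    intro m m' h
    have h' : (z.1 m : ℕ) + 1 = (z.1 m' : ℕ) + 1 := h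
    have h2 : (z.1 m : ℕ) = (z.1 m' : ℕ) := by omega
    have h3 : z.1 m = z.1 m' := Fin.ext h2
    rw [← hz1] at h3
    exact hinj n₀ h3
  · intro m
    by_cases h : z.2 m <;> simp [h]
  · intro m
    have hHeval : eval₂ ι ξ (H (z.1 m)) =
        1 + ∑ j : Fin k, ι ((((z.1 m : ℕ) + 1 : ℕ) : ℝ) ^ ((j : ℕ) + 1)) * ξ j ^ d' := by
      rw [hH (z.1 m)]
      rw [eval₂_add, eval₂_one]
      congr 1
      rw [eval₂_sum]
      refine Finset.sum_congr rfl fun j _ => ?_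
      rw [eval₂_mul, eval₂_C, eval₂_pow, eval₂_X]
      congr 1
      push_cast
      ring
    have hPgerm : ((fun n => eval (xn n) (P (z.1 m)) : ℕ → ℝ) : E) =
        eval₂ ι ξ (P (z.1 m)) := germ_eval_eq φ xn (P (z.1 m))
    have hHgerm : ((fun n => eval (xn n) (H (z.1 m)) : ℕ → ℝ) : E) =
        eval₂ ι ξ (H (z.1 m)) := germ_eval_eq φ xn (H (z.1 m))
    rw [← hHeval]
    rw [← hPgerm, ← hHgerm]
    have hconst : ι (if z.2 m then (1 : ℝ) else -1) =
        ((fun _ => if z.2 m then (1 : ℝ) else -1 : ℕ → ℝ) : E) := rfl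
    rw [hconst]
    show ((fun n => eval (xn n) (P (z.1 m)) : ℕ → ℝ) : E) =
      ((fun _ => if z.2 m then (1 : ℝ) else -1 : ℕ → ℝ) : E) *
        (((δ : ℕ → ℝ) : E) * ((fun n => eval (xn n) (H (z.1 m)) : ℕ → ℝ) : E))
    rw [← Germ.coe_mul, ← Germ.coe_mul]
    apply Germ.coe_eq.mpr
    filter_upwards [hz] with n hn
    have h1 : ifn n = z.1 := congrArg Prod.fst hn
    have h2 : σn n = z.2 := congrArg Prod.snd hn
    have h3 := heval n m
    rw [h1, h2] at h3
    exact h3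
end
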